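/- Let H_a be the nonlocal δ-interaction operator (H_a f = −f'' + f_r(0)q, domain {f ∈ W²₂(ℝ\{0}) : f_s(0)=0, f'_s(0) = a f_r(0) + (q,f)}). If H_a has a real eigenvalue, then H_a is a self-adjoint operator in L²(ℝ). -/

import Mathlib

open MeasureTheory Filter Set Complex

/-- An element of `W²₂(ℝ \ {0})`: a function together with its first and second
derivatives away from `0`, square-integrability of `f` and `f''`, and one-sided
boundary values `f(0±)`, `f'(0±)` at the origin. -/
structure W22 where
  f : ℝ → ℂ
  d1 : ℝ → ℂ
  d2 : ℝ → ℂ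
  hd1 : ∀ x : ℝ, x ≠ 0 → HasDerivAt f (d1 x) x
  hd2 : ∀ x : ℝ, x ≠ 0 → HasDerivAt d1 (d2 x) x
  l2f : MemLp f 2 (volume : Measure ℝ)
  l2d1 : MemLp d1 2 (volume : Measure ℝ)
  l2d2 : MemLp d2 2 (volume : Measure ℝ)
  fp : ℂ
  fm : ℂ
  dp : ℂ
  dm : ℂ
  hfp : Tendsto f (nhdsWithin 0 (Set.Ioi 0)) (nhds fp)
  hfm : Tendsto f (nhdsWithin 0 (Set.Iio 0)) (nhds fm)
  hdp : Tendsto d1 (nhdsWithin 0 (Set.Ioi 0)) (nhds dp)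
  hdm : Tendsto d1 (nhdsWithin 0 (Set.Iio 0)) (nhds dm)

/-- Mean value `f_r(0)`. -/
noncomputable def W22.fr (u : W22) : ℂ := (u.fp + u.fm) / 2
/-- Jump `f_s(0)`. -/
def W22.fs (u : W22) : ℂ := u.fp - u.fm
/-- Mean value `f'_r(0)`. -/
noncomputable def W22.dr (u : W22) : ℂ := (u.dp + u.dm) / 2
/-- Jump `f'_s(0)`. -/
def W22.ds (u : W22) : ℂ := u.dp - u.dm

/-- The `L²` inner product `(g, f) = ∫ g* f`, linear in the second argument. -/
noncomputable def ip (g f : ℝ → ℂ) : ℂ := ∫ x : ℝ, (starRingEnd ℂ) (g x) * f x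

/-- Action of the maximal operator `S_max f = -f''|_{x≠0} + f_r(0) q₁ - f'_r(0) q₂`. -/
noncomputable def Smax (q₁ q₂ : ℝ → ℂ) (u : W22) : ℝ → ℂ :=
  fun x => -(u.d2 x) + u.fr * q₁ x - u.dr * q₂ x

/-- Boundary map `Γ₀ f = (f_r(0), -f'_r(0))`. -/
noncomputable def Γ0 (u : W22) : ℂ × ℂ := (u.fr, -u.dr)

/-- Boundary map `Γ₁ f = (f'_s(0) - (q₁, f), f_s(0) - (q₂, f))`. -/
noncomputable def Γ1 (q₁ q₂ : ℝ → ℂ) (u : W22) : ℂ × ℂ :=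
  (u.ds - ip q₁ u.f, u.fs - ip q₂ u.f)

/-- The nonlocal δ-interaction operator action `H_a f = -f'' + f_r(0) q`. -/
noncomputable def Ha (q : ℝ → ℂ) (u : W22) : ℝ → ℂ := fun x => -(u.d2 x) + u.fr * q x

/-- Membership in the domain of `H_a`: `f_s(0) = 0` and `f'_s(0) = a f_r(0) + (q, f)`. -/
def InDomHa (a : ℂ) (q : ℝ → ℂ) (u : W22) : Prop :=
  u.fs = 0 ∧ u.ds = a * u.fr + ip q u.f

/-!
Green's formula gives `(H_a u, v) - (u, H_a v) = (ā - a) ū_r(0) v_r(0)` on the domain of `H_a`,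
so `H_a` is symmetric as soon as `a` is real. If `a` were not real, an eigenfunction `w` with
real eigenvalue `λ` would satisfy `(H_a w, w) = (w, H_a w)`, hence `w_r(0) = 0`; then `w` solves
`-w'' = λ w` on each half-line with `w(0±) = 0`. There the energy `|w'|² + λ |w|²` is constant
and, by square integrability, vanishes at infinity, so `|w'| ≤ √|λ| |w|` and Gronwall's
inequality forces `w = 0`.
-/

open ComplexConjugate
open scoped InnerProductSpace Topology

theorem MeasureTheory.MemLp.integrable_inner {α 𝕜 E : Type*} [RCLike 𝕜]
    [NormedAddCommGroup E] [InnerProductSpace 𝕜 E] {m : MeasurableSpace α} {μ : Measure α}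
    {f g : α → E}
    (hf : MemLp f 2 μ) (hg : MemLp g 2 μ) : Integrable (fun x => ⟪f x, g x⟫_𝕜) μ :=
  (L2.integrable_inner (hf.toLp f) (hg.toLp g)).congr <| by
    filter_upwards [hf.coeFn_toLp, hg.coeFn_toLp] with x hfx hgx
    rw [hfx, hgx]

theorem MeasureTheory.MemLp.integrable_conj_mul {α : Type*} {m : MeasurableSpace α}
    {μ : Measure α} {f g : α → ℂ} (hf : MemLp f 2 μ) (hg : MemLp g 2 μ) :
    Integrable (fun x => conj (f x) * g x) μ := by
  simpa only [RCLike.inner_apply, mul_comm] using hf.integrable_inner (𝕜 := ℂ) hg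

section HalfLine

variable {E : Type*} [NormedAddCommGroup E] {f f' : ℝ → E} {a : ℝ}

section NormedSpace

variable [NormedSpace ℝ E]

theorem eqOn_zero_of_norm_deriv_le_mul_norm {K : ℝ} (hf : ∀ x ∈ Ioi a, HasDerivAt f (f' x) x)
    (bound : ∀ x ∈ Ioi a, ‖f' x‖ ≤ K * ‖f x‖) (ha : Tendsto f (𝓝[>] a) (𝓝 0)) :
    EqOn f 0 (Ioi a) := by
  intro x hx
  have hgronwall : ∀ y ∈ Ioo a x, ‖f x‖ ≤ ‖f y‖ * Real.exp (K * (x - y)) := by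
    intro y hy
    have hsub : Icc y x ⊆ Ioi a := fun t ht => hy.1.trans_le ht.1
    have h := norm_le_gronwallBound_of_norm_deriv_right_le (δ := ‖f y‖) (ε := 0)
      (fun t ht => (hf t (hsub ht)).continuousAt.continuousWithinAt)
      (fun t ht => (hf t (hsub (Ico_subset_Icc_self ht))).hasDerivWithinAt) le_rfl
      (fun t ht => by simpa using bound t (hsub (Ico_subset_Icc_self ht))) x ⟨hy.2.le, le_rfl⟩
    rwa [gronwallBound_ε0] at h
  have hlim : Tendsto (fun y => ‖f y‖ * Real.exp (K * (x - y))) (𝓝[>] a)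
      (𝓝 (‖(0 : E)‖ * Real.exp (K * (x - a)))) :=
    ha.norm.mul (Continuous.tendsto (by fun_prop) a |>.mono_left nhdsWithin_le_nhds)
  have h := ge_of_tendsto hlim (eventually_of_mem (Ioo_mem_nhdsGT hx) hgronwall)
  simpa using h

variable [CompleteSpace E]

theorem integral_Ioi_of_hasDerivAt_of_tendsto_nhdsGT {l m : E}
    (hderiv : ∀ x ∈ Ioi a, HasDerivAt f (f' x) x) (f'int : IntegrableOn f' (Ioi a))
    (ha : Tendsto f (𝓝[>] a) (𝓝 l)) (htop : Tendsto f atTop (𝓝 m)) :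
    ∫ x in Ioi a, f' x = m - l := by
  classical
  have h := integral_Ioi_of_hasDerivAt_of_tendsto (f := Function.update f a l)
    (by rwa [continuousWithinAt_update_same, Ici_sdiff_left])
    (fun x hx => (hderiv x hx).congr_of_eventuallyEq <| by
      filter_upwards [eventually_ne_nhds hx.ne'] with y hy
      exact Function.update_of_ne hy _ _)
    f'int
    (htop.congr' <| by
      filter_upwards [eventually_ne_atTop a] with y hy
      exact (Function.update_of_ne hy _ _).symm)
  simpa using h

theorem integral_Iio_of_hasDerivAt_of_tendsto_nhdsLT {l m : E}
    (hderiv : ∀ x ∈ Iio a, HasDerivAt f (f' x) x) (f'int : IntegrableOn f' (Iio a))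
    (ha : Tendsto f (𝓝[<] a) (𝓝 l)) (hbot : Tendsto f atBot (𝓝 m)) :
    ∫ x in Iio a, f' x = l - m := by
  classical
  have h := integral_Iic_of_hasDerivAt_of_tendsto (f := Function.update f a l)
    (by rwa [continuousWithinAt_update_same, Iic_sdiff_right])
    (fun x hx => (hderiv x hx).congr_of_eventuallyEq <| by
      filter_upwards [eventually_ne_nhds hx.ne] with y hy
      exact Function.update_of_ne hy _ _)
    (f'int.congr_set_ae Iio_ae_eq_Iic.symm)
    (hbot.congr' <| by
      filter_upwards [eventually_ne_atBot a] with y hy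
      exact (Function.update_of_ne hy _ _).symm)
  rw [setIntegral_congr_set Iio_ae_eq_Iic]
  simpa using h

end NormedSpace

variable [InnerProductSpace ℝ E]

theorem tendsto_atTop_zero_of_memLp_two (hf : ∀ x ∈ Ioi a, HasDerivAt f (f' x) x)
    (hf2 : MemLp f 2 (volume.restrict (Ioi a))) (hf'2 : MemLp f' 2 (volume.restrict (Ioi a))) :
    Tendsto f atTop (𝓝 0) := by
  have hsq : Tendsto (fun x => ‖f x‖ ^ 2) atTop (𝓝 0) :=
    tendsto_zero_of_hasDerivAt_of_integrableOn_Ioi (fun x hx => (hf x hx).norm_sq)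
      ((hf2.integrable_inner hf'2).const_mul 2) ((memLp_two_iff_integrable_sq_norm hf2.1).1 hf2)
  rw [tendsto_zero_iff_norm_tendsto_zero]
  simpa using hsq.sqrt

theorem tendsto_atBot_zero_of_memLp_two (hf : ∀ x ∈ Iio a, HasDerivAt f (f' x) x)
    (hf2 : MemLp f 2 (volume.restrict (Iio a))) (hf'2 : MemLp f' 2 (volume.restrict (Iio a))) :
    Tendsto f atBot (𝓝 0) := by
  have hsub : Iic (a - 1) ⊆ Iio a := Iic_subset_Iio.2 (sub_one_lt a)
  have hsq : Tendsto (fun x => ‖f x‖ ^ 2) atBot (𝓝 0) :=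
    tendsto_zero_of_hasDerivAt_of_integrableOn_Iic (fun x hx => (hf x (hsub hx)).norm_sq)
      (IntegrableOn.mono_set ((hf2.integrable_inner (𝕜 := ℝ) hf'2).const_mul 2) hsub)
      (IntegrableOn.mono_set ((memLp_two_iff_integrable_sq_norm hf2.1).1 hf2) hsub)
  rw [tendsto_zero_iff_norm_tendsto_zero]
  simpa using hsq.sqrt

end HalfLine

section Eigenfunction

variable {E : Type*} [NormedAddCommGroup E] [InnerProductSpace ℝ E] {f f' f'' : ℝ → E}
  {a lam : ℝ}

theorem eqOn_zero_Ioi_of_deriv_eq_neg_smul (hf : ∀ x ∈ Ioi a, HasDerivAt f (f' x) x)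
    (hf' : ∀ x ∈ Ioi a, HasDerivAt f' (f'' x) x)
    (hf2 : MemLp f 2 (volume.restrict (Ioi a))) (hf'2 : MemLp f' 2 (volume.restrict (Ioi a)))
    (heq : ∀ᵐ x ∂volume.restrict (Ioi a), f'' x = -lam • f x)
    (ha : Tendsto f (𝓝[>] a) (𝓝 0)) : EqOn f 0 (Ioi a) := by
  set energy : ℝ → ℝ := fun x => ‖f' x‖ ^ 2 + lam * ‖f x‖ ^ 2
  set energy' : ℝ → ℝ := fun x => 2 * ⟪f' x, f'' x⟫_ℝ + lam * (2 * ⟪f x, f' x⟫_ℝ)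
  have hderiv : ∀ x ∈ Ioi a, HasDerivAt energy (energy' x) x :=
    fun x hx => (hf' x hx).norm_sq.add ((hf x hx).norm_sq.const_mul lam)
  have hderiv_ae : ∀ᵐ x ∂volume.restrict (Ioi a), energy' x = 0 := by
    filter_upwards [heq] with x hx
    simp only [energy', hx, inner_smul_right, real_inner_comm (f x)]
    ring
  have htop : Tendsto energy atTop (𝓝 0) := by
    have hf''2 : MemLp f'' 2 (volume.restrict (Ioi a)) :=
      (hf2.const_smul (-lam)).ae_eq (EventuallyEq.symm heq)
    simpa [energy] using
      ((tendsto_atTop_zero_of_memLp_two hf' hf'2 hf''2).norm.pow 2).add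
        (((tendsto_atTop_zero_of_memLp_two hf hf2 hf'2).norm.pow 2).const_mul lam)
  have henergy : ∀ x ∈ Ioi a, energy x = 0 := by
    intro x hx
    have hae : energy' =ᵐ[volume.restrict (Ioi x)] 0 :=
      ae_restrict_of_ae_restrict_of_subset (Ioi_subset_Ioi hx.le) hderiv_ae
    have h := integral_Ioi_of_hasDerivAt_of_tendsto'
      (fun y hy => hderiv y (mem_Ioi.2 (hx.trans_le hy))) ((integrable_zero _ _ _).congr hae.symm)
      htop
    rw [integral_congr_ae hae] at h
    simpa using h.symm
  refine eqOn_zero_of_norm_deriv_le_mul_norm hf (K := √|lam|) (fun x hx => ?_) ha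
  have h := henergy x hx
  refine (pow_le_pow_iff_left₀ (norm_nonneg _) (by positivity) two_ne_zero).1 ?_
  rw [mul_pow, Real.sq_sqrt (abs_nonneg lam)]
  nlinarith [neg_le_abs lam, sq_nonneg ‖f x‖]

theorem eqOn_zero_Iio_of_deriv_eq_neg_smul (hf : ∀ x ∈ Iio a, HasDerivAt f (f' x) x)
    (hf' : ∀ x ∈ Iio a, HasDerivAt f' (f'' x) x)
    (hf2 : MemLp f 2 (volume.restrict (Iio a))) (hf'2 : MemLp f' 2 (volume.restrict (Iio a)))
    (heq : ∀ᵐ x ∂volume.restrict (Iio a), f'' x = -lam • f x)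
    (ha : Tendsto f (𝓝[<] a) (𝓝 0)) : EqOn f 0 (Iio a) := by
  have hneg :
      MeasurePreserving Neg.neg (volume.restrict (Ioi (-a))) (volume.restrict (Iio a)) := by
    simpa [neg_Iio] using (Measure.measurePreserving_neg volume).restrict_preimage
      (measurableSet_Iio (a := a))
  have hmem : ∀ x ∈ Ioi (-a), -x ∈ Iio a := fun x hx => mem_Iio.2 (neg_lt.1 hx)
  have hreflect := eqOn_zero_Ioi_of_deriv_eq_neg_smul (f := fun x => f (-x))
    (f' := fun x => -f' (-x)) (f'' := fun x => f'' (-x))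
    (fun x hx => by
      simpa [Function.comp_def] using (hf (-x) (hmem x hx)).scomp x (hasDerivAt_neg x))
    (fun x hx => by
      simpa [Function.comp_def, Pi.neg_def] using
        ((hf' (-x) (hmem x hx)).scomp x (hasDerivAt_neg x)).neg)
    (hf2.comp_measurePreserving hneg) (hf'2.neg.comp_measurePreserving hneg)
    (hneg.quasiMeasurePreserving.ae heq)
    (by simpa [Function.comp_def] using ha.comp tendsto_neg_nhdsGT_neg)
  intro x hx
  simpa using hreflect (show -x ∈ Ioi (-a) from mem_Ioi.2 (neg_lt_neg hx))

end Eigenfunction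

theorem conj_ip (g f : ℝ → ℂ) : conj (ip g f) = ip f g := by
  simp only [ip, ← integral_conj, map_mul, conj_conj, mul_comm]

theorem ip_eq_ip_of_ae_eq_ofReal_mul {g f : ℝ → ℂ} {lam : ℝ} (h : ∀ᵐ x, g x = lam * f x) :
    ip g f = ip f g := by
  unfold ip
  refine integral_congr_ae ?_
  filter_upwards [h] with x hx
  simp only [hx, map_mul, conj_ofReal]
  ring

namespace W22

variable (u v : W22)

theorem fp_eq_fr (h : u.fs = 0) : u.fp = u.fr := by
  rw [fs, sub_eq_zero] at h
  rw [fr, h]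
  ring

theorem fm_eq_fr (h : u.fs = 0) : u.fm = u.fr := by
  rw [fs, sub_eq_zero] at h
  rw [fr, h]
  ring

theorem tendsto_f_atTop : Tendsto u.f atTop (𝓝 0) :=
  tendsto_atTop_zero_of_memLp_two (fun x hx => u.hd1 x (ne_of_gt hx)) (u.l2f.restrict _)
    (u.l2d1.restrict _)

theorem tendsto_d1_atTop : Tendsto u.d1 atTop (𝓝 0) :=
  tendsto_atTop_zero_of_memLp_two (fun x hx => u.hd2 x (ne_of_gt hx)) (u.l2d1.restrict _)
    (u.l2d2.restrict _)

theorem tendsto_f_atBot : Tendsto u.f atBot (𝓝 0) :=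
  tendsto_atBot_zero_of_memLp_two (fun x hx => u.hd1 x (ne_of_lt hx)) (u.l2f.restrict _)
    (u.l2d1.restrict _)

theorem tendsto_d1_atBot : Tendsto u.d1 atBot (𝓝 0) :=
  tendsto_atBot_zero_of_memLp_two (fun x hx => u.hd2 x (ne_of_lt hx)) (u.l2d1.restrict _)
    (u.l2d2.restrict _)

def wronskian (x : ℝ) : ℂ := conj (u.f x) * v.d1 x - conj (u.d1 x) * v.f x

theorem hasDerivAt_wronskian {x : ℝ} (hx : x ≠ 0) :
    HasDerivAt (u.wronskian v) (conj (u.f x) * v.d2 x - conj (u.d2 x) * v.f x) x := by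
  have hconj : ∀ {g g' : ℝ → ℂ}, HasDerivAt g (g' x) x →
      HasDerivAt (fun y => conj (g y)) (conj (g' x)) x :=
    fun h => by simpa only [RCLike.star_def] using h.star
  exact (((hconj (u.hd1 x hx)).mul (v.hd2 x hx)).sub
    ((hconj (u.hd2 x hx)).mul (v.hd1 x hx))).congr_deriv (by ring)

theorem tendsto_wronskian_atTop : Tendsto (u.wronskian v) atTop (𝓝 0) := by
  have h := (((continuous_conj.tendsto 0).comp u.tendsto_f_atTop).mul v.tendsto_d1_atTop).sub
    (((continuous_conj.tendsto 0).comp u.tendsto_d1_atTop).mul v.tendsto_f_atTop)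
  rwa [map_zero, zero_mul, sub_zero] at h

theorem tendsto_wronskian_atBot : Tendsto (u.wronskian v) atBot (𝓝 0) := by
  have h := (((continuous_conj.tendsto 0).comp u.tendsto_f_atBot).mul v.tendsto_d1_atBot).sub
    (((continuous_conj.tendsto 0).comp u.tendsto_d1_atBot).mul v.tendsto_f_atBot)
  rwa [map_zero, zero_mul, sub_zero] at h

theorem tendsto_wronskian_nhdsGT :
    Tendsto (u.wronskian v) (𝓝[>] 0) (𝓝 (conj u.fp * v.dp - conj u.dp * v.fp)) :=
  (((continuous_conj.tendsto _).comp u.hfp).mul v.hdp).sub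
    (((continuous_conj.tendsto _).comp u.hdp).mul v.hfp)

theorem tendsto_wronskian_nhdsLT :
    Tendsto (u.wronskian v) (𝓝[<] 0) (𝓝 (conj u.fm * v.dm - conj u.dm * v.fm)) :=
  (((continuous_conj.tendsto _).comp u.hfm).mul v.hdm).sub
    (((continuous_conj.tendsto _).comp u.hdm).mul v.hfm)

theorem ip_f_d2_sub_ip_d2_f :
    ip u.f v.d2 - ip u.d2 v.f =
      (conj u.fm * v.dm - conj u.dm * v.fm) - (conj u.fp * v.dp - conj u.dp * v.fp) := by
  have hint : Integrable (fun x => conj (u.f x) * v.d2 x - conj (u.d2 x) * v.f x) :=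
    (u.l2f.integrable_conj_mul v.l2d2).sub (u.l2d2.integrable_conj_mul v.l2f)
  rw [ip, ip, ← integral_sub (u.l2f.integrable_conj_mul v.l2d2) (u.l2d2.integrable_conj_mul v.l2f),
    ← intervalIntegral.integral_Iio_add_Ici hint.integrableOn hint.integrableOn,
    ← setIntegral_congr_set Ioi_ae_eq_Ici,
    integral_Iio_of_hasDerivAt_of_tendsto_nhdsLT
      (fun x hx => u.hasDerivAt_wronskian v (ne_of_lt hx)) hint.integrableOn
      (u.tendsto_wronskian_nhdsLT v) (u.tendsto_wronskian_atBot v),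
    integral_Ioi_of_hasDerivAt_of_tendsto_nhdsGT
      (fun x hx => u.hasDerivAt_wronskian v (ne_of_gt hx)) hint.integrableOn
      (u.tendsto_wronskian_nhdsGT v) (u.tendsto_wronskian_atTop v)]
  ring

theorem f_eq_zero_of_d2_eq_neg_mul {lam : ℝ}
    (heq : ∀ᵐ x, u.d2 x = -lam * u.f x) (hp : u.fp = 0) (hm : u.fm = 0) {x : ℝ} (hx : x ≠ 0) :
    u.f x = 0 := by
  have heq' : ∀ᵐ x, u.d2 x = -lam • u.f x := by simpa [Complex.real_smul] using heq
  rcases hx.lt_or_gt with hneg | hpos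
  · exact eqOn_zero_Iio_of_deriv_eq_neg_smul (fun x hx => u.hd1 x (ne_of_lt hx))
      (fun x hx => u.hd2 x (ne_of_lt hx)) (u.l2f.restrict _) (u.l2d1.restrict _)
      (ae_restrict_of_ae heq') (hm ▸ u.hfm) hneg
  · exact eqOn_zero_Ioi_of_deriv_eq_neg_smul (fun x hx => u.hd1 x (ne_of_gt hx))
      (fun x hx => u.hd2 x (ne_of_gt hx)) (u.l2f.restrict _) (u.l2d1.restrict _)
      (ae_restrict_of_ae heq') (hp ▸ u.hfp) hpos

end W22

section DeltaInteraction

variable {a : ℂ} {q : ℝ → ℂ}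

theorem ip_Ha_left (hq : MemLp q 2 volume) (u : W22) {g : ℝ → ℂ} (hg : MemLp g 2 volume) :
    ip (Ha q u) g = -ip u.d2 g + conj u.fr * ip q g := by
  simp only [ip, Ha, map_add, map_neg, map_mul, neg_mul, add_mul, mul_assoc]
  rw [integral_add (u.l2d2.integrable_conj_mul hg).fun_neg
    ((hq.integrable_conj_mul hg).const_mul _), integral_neg, integral_const_mul]

theorem ip_Ha_right (hq : MemLp q 2 volume) (v : W22) {g : ℝ → ℂ} (hg : MemLp g 2 volume) :
    ip g (Ha q v) = -ip g v.d2 + v.fr * conj (ip q g) := by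
  rw [conj_ip]
  simp only [ip, Ha, mul_add, mul_neg, mul_left_comm _ v.fr]
  rw [integral_add (hg.integrable_conj_mul v.l2d2).fun_neg
    ((hg.integrable_conj_mul hq).const_mul _), integral_neg, integral_const_mul]

theorem ip_Ha_sub_ip_Ha (hq : MemLp q 2 volume) {u v : W22} (hu : InDomHa a q u)
    (hv : InDomHa a q v) :
    ip (Ha q u) v.f - ip u.f (Ha q v) = (conj a - a) * (conj u.fr * v.fr) := by
  have hlagrange := u.ip_f_d2_sub_ip_d2_f v
  rw [u.fp_eq_fr hu.1, u.fm_eq_fr hu.1, v.fp_eq_fr hv.1, v.fm_eq_fr hv.1] at hlagrange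
  have hud : conj u.dp - conj u.dm = conj a * conj u.fr + conj (ip q u.f) := by
    simpa only [W22.ds, map_sub, map_add, map_mul] using congrArg conj hu.2
  have hvd : v.dp - v.dm = a * v.fr + ip q v.f := hv.2
  rw [ip_Ha_left hq u v.l2f, ip_Ha_right hq v u.l2f]
  linear_combination hlagrange + v.fr * hud - conj u.fr * hvd

end DeltaInteraction

theorem stmt13_general (a : ℂ)
    (q : ℝ → ℂ) (hq : MemLp q 2 (volume : Measure ℝ))
    (heig : ∃ (lam : ℝ) (u : W22), InDomHa a q u ∧ (∃ x : ℝ, x ≠ 0 ∧ u.f x ≠ 0) ∧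
      (∀ᵐ x : ℝ, Ha q u x = (lam : ℂ) * u.f x)) :
    ∀ u v : W22, InDomHa a q u → InDomHa a q v →
      ip (Ha q u) v.f = ip u.f (Ha q v) := by
  obtain ⟨lam, w, hw, ⟨x₀, hx₀, hwx₀⟩, hweig⟩ := heig
  suffices ha : conj a = a by
    intro u v hu hv
    simpa [ha, sub_eq_zero] using ip_Ha_sub_ip_Ha hq hu hv
  by_contra ha
  have hwr : w.fr = 0 := by
    have h := ip_Ha_sub_ip_Ha hq hw hw
    rw [ip_eq_ip_of_ae_eq_ofReal_mul hweig, sub_self] at h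
    simpa [sub_eq_zero, ha] using h.symm
  have heq : ∀ᵐ x, w.d2 x = -lam * w.f x := by
    filter_upwards [hweig] with x hx
    simp only [Ha, hwr, zero_mul, add_zero] at hx
    linear_combination -hx
  exact hwx₀ <| w.f_eq_zero_of_d2_eq_neg_mul heq (by rw [w.fp_eq_fr hw.1, hwr])
    (by rw [w.fm_eq_fr hw.1, hwr]) hx₀

/-- if the nonlocal δ-interaction operator `H_a` has a real eigenvalue,
then `H_a` is self-adjoint in `L²(ℝ)` (formulated here as the symmetry identity
`(H_a u, v) = (u, H_a v)` on the domain, which for this one-dimensional proper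
extension of the defect-one symmetric operator `S̃_min` is equivalent to
self-adjointness). -/
theorem stmt13 (a : ℂ)
    (q : ℝ → ℂ) (hq : MemLp q 2 (volume : Measure ℝ))
    (hqpc : ∃ s : Finset ℝ, ∀ x ∉ s, ContinuousAt q x)
    (heig : ∃ (lam : ℝ) (u : W22), InDomHa a q u ∧ (∃ x : ℝ, x ≠ 0 ∧ u.f x ≠ 0) ∧
      (∀ᵐ x : ℝ, Ha q u x = (lam : ℂ) * u.f x)) :
    ∀ u v : W22, InDomHa a q u → InDomHa a q v →
      ip (Ha q u) v.f = ip u.f (Ha q v) :=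
  stmt13_general a q hq heig
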